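/- Let S ⊂ ℝ² be bounded open, u ∈ C²(S̄, ℝ³) an isometric immersion (∂_α u · ∂_β u = δ_{αβ}) with normal n, second fundamental form Π, α ∈ C¹(S̄), g ∈ C¹(S̄, ℝ²), and set v^h(x', x₃) = u(x') + h[(x₃ + α(x'))n(x') + (g(x')·∇')u(x')] for (x', x₃) ∈ S × I. Let R(x') = (∇'u(x'), n(x')) ∈ SO(3). Then Rᵀ∇_h v^h = I + hG with G = ι(x₃Π + B) − e₃ ⊗ (b, 0) in block form, where B = ∇'g + αΠ, b = −∇'α + Πg, ∇_h v^h = (∇'v^h, (1/h)∂₃v^h), and ι embeds 2×2 matrices into the upper-left 3×3 block; here the (3,1) and (3,2) entries of G are −b₁, −b₂ and the remaining entries outside the upper-left block are 0. -/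

import Mathlib

/-! Let R = (∂₁u, ∂₂u, n). The first two columns of ∇_h v^h are
∂_β u + h ∂_β[(x₃ + α) n + g_γ ∂_γ u] and the third is n, so the entries of Rᵀ ∇_h v^h are
dot products of the frame with these vectors. Three consequences of ∂_α u · ∂_β u = δ_αβ
evaluate them: ∂_α u · ∂_β∂_γ u = 0, since this is symmetric in (β, γ) and, after
differentiating the isometry relation, antisymmetric in (α, γ); n · ∂_β n = 0, from |n|² = 1;
and n · ∂_β∂_γ u = -Π_γβ, from ∂_γ u · n = 0, which also shows that Π is symmetric. -/

open Matrix

noncomputable section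

/-- Partial derivative of a vector field on ℝ². -/
def pd (β : Fin 2) (f : (Fin 2 → ℝ) → (Fin 3 → ℝ)) (z : Fin 2 → ℝ) : Fin 3 → ℝ :=
  fderiv ℝ f z (Pi.single β 1)

/-- The normal n = ∂₁u ∧ ∂₂u. -/
def nrm (u : (Fin 2 → ℝ) → (Fin 3 → ℝ)) (z : Fin 2 → ℝ) : Fin 3 → ℝ :=
  crossProduct (pd 0 u z) (pd 1 u z)

/-- The second fundamental form Π_{αβ} = ∂_α u · ∂_β n. -/
def sff (u : (Fin 2 → ℝ) → (Fin 3 → ℝ)) (z : Fin 2 → ℝ) : Matrix (Fin 2) (Fin 2) ℝ :=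
  Matrix.of fun a b => pd a u z ⬝ᵥ pd b (nrm u) z

/-- Schmidt's ansatz v^h(x',x₃) = u(x') + h[(x₃+α(x'))n(x') + (g(x')·∇')u(x')]. -/
def ansatz (u : (Fin 2 → ℝ) → (Fin 3 → ℝ)) (α : (Fin 2 → ℝ) → ℝ)
    (g : (Fin 2 → ℝ) → (Fin 2 → ℝ)) (h x3 : ℝ) (z : Fin 2 → ℝ) : Fin 3 → ℝ :=
  u z + h • ((x3 + α z) • nrm u z + g z 0 • pd 0 u z + g z 1 • pd 1 u z)

/-- The scaled gradient ∇_h v^h = (∂₁v^h, ∂₂v^h, (1/h)∂₃v^h) as a 3×3 matrix. -/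
def scaledGradAnsatz (u : (Fin 2 → ℝ) → (Fin 3 → ℝ)) (α : (Fin 2 → ℝ) → ℝ)
    (g : (Fin 2 → ℝ) → (Fin 2 → ℝ)) (h x3 : ℝ) (z : Fin 2 → ℝ) :
    Matrix (Fin 3) (Fin 3) ℝ :=
  Matrix.of fun i j =>
    (![pd 0 (fun z' => ansatz u α g h x3 z') z,
       pd 1 (fun z' => ansatz u α g h x3 z') z,
       (1 / h) • deriv (fun t => ansatz u α g h t z) x3] : Fin 3 → Fin 3 → ℝ) j i

/-- The frame R = (∂₁u, ∂₂u, n) (columns). -/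
def Rmat (u : (Fin 2 → ℝ) → (Fin 3 → ℝ)) (z : Fin 2 → ℝ) : Matrix (Fin 3) (Fin 3) ℝ :=
  Matrix.of fun i j => (![pd 0 u z, pd 1 u z, nrm u z]) j i

/-- B = ∇'g + αΠ. -/
def Bfield (u : (Fin 2 → ℝ) → (Fin 3 → ℝ)) (α : (Fin 2 → ℝ) → ℝ)
    (g : (Fin 2 → ℝ) → (Fin 2 → ℝ)) (z : Fin 2 → ℝ) : Matrix (Fin 2) (Fin 2) ℝ :=
  Matrix.of fun a b => fderiv ℝ g z (Pi.single b 1) a + α z * sff u z a b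

/-- b = −∇'α + Πg. -/
def bfield (u : (Fin 2 → ℝ) → (Fin 3 → ℝ)) (α : (Fin 2 → ℝ) → ℝ)
    (g : (Fin 2 → ℝ) → (Fin 2 → ℝ)) (z : Fin 2 → ℝ) : Fin 2 → ℝ :=
  fun a => -(fderiv ℝ α z (Pi.single a 1)) + ∑ b, sff u z a b * g z b

/-- G = ι(x₃Π + B) − e₃ ⊗ (b,0): upper-left block x₃Π + B, third row (−b₁, −b₂, 0),
third column zero. -/
def Gfield (u : (Fin 2 → ℝ) → (Fin 3 → ℝ)) (α : (Fin 2 → ℝ) → ℝ)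
    (g : (Fin 2 → ℝ) → (Fin 2 → ℝ)) (x3 : ℝ) (z : Fin 2 → ℝ) :
    Matrix (Fin 3) (Fin 3) ℝ :=
  let A := x3 • sff u z + Bfield u α g z
  Matrix.of ![![A 0 0, A 0 1, 0], ![A 1 0, A 1 1, 0],
    ![-(bfield u α g z 0), -(bfield u α g z 1), 0]]

open Filter Topology

theorem eq_zero_of_symm_of_antisymm {ι M : Type*} [AddCommGroup M] [IsAddTorsionFree M]
    {T : ι → ι → ι → M} (hsymm : ∀ a b c, T a b c = T a c b)
    (hanti : ∀ a b c, T a b c = -T c b a) (a b c : ι) : T a b c = 0 := by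
  have h : T a b c = -T a b c := calc
    T a b c = -T c b a := hanti ..
    _ = -T c a b := by rw [hsymm c]
    _ = T b a c := by rw [hanti c a b, neg_neg]
    _ = T b c a := hsymm ..
    _ = -T a c b := hanti ..
    _ = -T a b c := by rw [hsymm a c b]
  refine two_nsmul_eq_zero.mp ?_
  rw [two_nsmul]
  nth_rw 2 [h]
  exact add_neg_cancel _

section DotProduct

variable {E : Type*} [NormedAddCommGroup E] [NormedSpace ℝ E] {ι : Type*} [Fintype ι]
  {f g : E → ι → ℝ} {z : E}

theorem fderiv_dotProduct_apply (hf : DifferentiableAt ℝ f z) (hg : DifferentiableAt ℝ g z)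
    (v : E) :
    fderiv ℝ (fun w => f w ⬝ᵥ g w) z v = fderiv ℝ f z v ⬝ᵥ g z + f z ⬝ᵥ fderiv ℝ g z v := by
  have hfi := hasFDerivAt_pi'.mp hf.hasFDerivAt
  have hgi := hasFDerivAt_pi'.mp hg.hasFDerivAt
  change fderiv ℝ (fun w => ∑ i, f w i * g w i) z v = _
  rw [(HasFDerivAt.fun_sum fun i _ => (hfi i).fun_mul (hgi i)).fderiv]
  simp [dotProduct, Finset.sum_add_distrib, mul_comm, add_comm]

theorem fderiv_dotProduct_add_eq_zero_of_eventuallyEq (hf : DifferentiableAt ℝ f z)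
    (hg : DifferentiableAt ℝ g z) {c : ℝ} (hc : (fun w => f w ⬝ᵥ g w) =ᶠ[𝓝 z] fun _ => c)
    (v : E) : fderiv ℝ f z v ⬝ᵥ g z + f z ⬝ᵥ fderiv ℝ g z v = 0 := by
  rw [← fderiv_dotProduct_apply hf hg, hc.fderiv_eq, fderiv_const_apply, _root_.zero_apply]

end DotProduct

def IsometricAt (u : (Fin 2 → ℝ) → (Fin 3 → ℝ)) (w : Fin 2 → ℝ) : Prop :=
  ∀ a b : Fin 2, pd a u w ⬝ᵥ pd b u w = if a = b then 1 else 0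

section Immersion

variable {u : (Fin 2 → ℝ) → (Fin 3 → ℝ)} {z : Fin 2 → ℝ}

theorem pd_dotProduct_nrm (u : (Fin 2 → ℝ) → (Fin 3 → ℝ)) (z : Fin 2 → ℝ) (a : Fin 2) :
    pd a u z ⬝ᵥ nrm u z = 0 := by
  fin_cases a
  · exact dot_self_cross _ _
  · exact dot_cross_self _ _

theorem IsometricAt.nrm_dotProduct_nrm (hiso : IsometricAt u z) : nrm u z ⬝ᵥ nrm u z = 1 := by
  simp [nrm, cross_dot_cross, hiso 0 0, hiso 1 1, hiso 0 1, hiso 1 0]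

theorem differentiableAt_pd (hu : ContDiffAt ℝ 2 u z) (a : Fin 2) :
    DifferentiableAt ℝ (pd a u) z :=
  ((hu.fderiv_right (by norm_num)).differentiableAt one_ne_zero).clm_apply
    (differentiableAt_const _)

theorem differentiableAt_nrm (hu : ContDiffAt ℝ 2 u z) : DifferentiableAt ℝ (nrm u) z := by
  have hpd := fun a => differentiableAt_pi.mp (differentiableAt_pd hu a)
  refine differentiableAt_pi.mpr fun i => ?_
  fin_cases i <;>
    simp only [nrm, cross_apply, Fin.zero_eta, Fin.mk_one, Fin.reduceFinMk, cons_val_zero,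
      cons_val_one, cons_val_two, head_cons, tail_cons] <;>
    fun_prop

theorem pd_pd_comm (hu : ContDiffAt ℝ 2 u z) (b c : Fin 2) :
    pd b (pd c u) z = pd c (pd b u) z := by
  have hd := (hu.fderiv_right (by norm_num)).differentiableAt one_ne_zero
  have hsnd := hu.isSymmSndFDerivAt (by simp)
  have h2 : ∀ a d : Fin 2, pd a (pd d u) z
      = fderiv ℝ (fderiv ℝ u) z (Pi.single a 1) (Pi.single d 1) := fun a d => by
    change fderiv ℝ (fun w => fderiv ℝ u w (Pi.single d 1)) z (Pi.single a 1) = _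
    rw [fderiv_clm_apply hd (differentiableAt_const _)]
    simp
  rw [h2, h2, hsnd]

theorem pd_dotProduct_pd_pd (hu : ContDiffAt ℝ 2 u z) (hiso : ∀ᶠ w in 𝓝 z, IsometricAt u w)
    (a b c : Fin 2) : pd a u z ⬝ᵥ pd b (pd c u) z = 0 := by
  refine eq_zero_of_symm_of_antisymm (T := fun a b c => pd a u z ⬝ᵥ pd b (pd c u) z)
    (fun a b c => by rw [pd_pd_comm hu]) (fun a b c => ?_) a b c
  have h := fderiv_dotProduct_add_eq_zero_of_eventuallyEq (differentiableAt_pd hu c)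
    (differentiableAt_pd hu a) (hiso.mono fun w hw => hw c a) (Pi.single b 1)
  rw [dotProduct_comm] at h
  exact eq_neg_of_add_eq_zero_left h

theorem nrm_dotProduct_pd_nrm (hu : ContDiffAt ℝ 2 u z) (hiso : ∀ᶠ w in 𝓝 z, IsometricAt u w)
    (b : Fin 2) : nrm u z ⬝ᵥ pd b (nrm u) z = 0 := by
  have h := fderiv_dotProduct_add_eq_zero_of_eventuallyEq (differentiableAt_nrm hu)
    (differentiableAt_nrm hu) (hiso.mono fun w hw => hw.nrm_dotProduct_nrm) (Pi.single b 1)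
  rw [dotProduct_comm, ← two_mul, mul_eq_zero] at h
  exact h.resolve_left two_ne_zero

theorem nrm_dotProduct_pd_pd (hu : ContDiffAt ℝ 2 u z) (b c : Fin 2) :
    nrm u z ⬝ᵥ pd b (pd c u) z = -sff u z c b := by
  have h := fderiv_dotProduct_add_eq_zero_of_eventuallyEq (differentiableAt_pd hu c)
    (differentiableAt_nrm hu) (.of_forall fun w => pd_dotProduct_nrm u w c) (Pi.single b 1)
  rw [dotProduct_comm] at h
  exact eq_neg_of_add_eq_zero_left h

theorem sff_comm (hu : ContDiffAt ℝ 2 u z) (a b : Fin 2) : sff u z a b = sff u z b a := by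
  rw [← neg_inj, ← nrm_dotProduct_pd_pd hu, ← nrm_dotProduct_pd_pd hu, pd_pd_comm hu]

end Immersion

section Ansatz

variable {u : (Fin 2 → ℝ) → (Fin 3 → ℝ)} {α : (Fin 2 → ℝ) → ℝ}
  {g : (Fin 2 → ℝ) → (Fin 2 → ℝ)} {h x3 : ℝ} {z : Fin 2 → ℝ}

theorem one_div_smul_deriv_ansatz (hh : h ≠ 0) :
    (1 / h) • deriv (fun t => ansatz u α g h t z) x3 = nrm u z := by
  have hd : HasDerivAt (fun t => ansatz u α g h t z) (h • ((1 : ℝ) • nrm u z)) x3 :=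
    (((((hasDerivAt_id x3).add_const (α z)).smul_const (nrm u z)).add_const _).add_const
      _).const_smul h |>.const_add (u z)
  rw [hd.deriv, one_smul, smul_smul, one_div_mul_cancel hh, one_smul]

theorem pd_ansatz (hu : ContDiffAt ℝ 2 u z) (hα : DifferentiableAt ℝ α z)
    (hg : DifferentiableAt ℝ g z) (b : Fin 2) :
    pd b (fun z' => ansatz u α g h x3 z') z
      = pd b u z + h • ((x3 + α z) • pd b (nrm u) z + fderiv ℝ α z (Pi.single b 1) • nrm u z
        + (g z 0 • pd b (pd 0 u) z + fderiv ℝ g z (Pi.single b 1) 0 • pd 0 u z)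
        + (g z 1 • pd b (pd 1 u) z + fderiv ℝ g z (Pi.single b 1) 1 • pd 1 u z)) := by
  have hgi := hasFDerivAt_pi'.mp hg.hasFDerivAt
  have hA := (hu.differentiableAt (by norm_num)).hasFDerivAt.add
    (((((hα.hasFDerivAt.const_add x3).smul (differentiableAt_nrm hu).hasFDerivAt).add
      ((hgi 0).smul (differentiableAt_pd hu 0).hasFDerivAt)).add
      ((hgi 1).smul (differentiableAt_pd hu 1).hasFDerivAt)).const_smul h)
  exact DFunLike.congr_fun hA.fderiv (Pi.single b 1)

theorem pd_dotProduct_pd_ansatz (hu : ContDiffAt ℝ 2 u z) (hα : DifferentiableAt ℝ α z)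
    (hg : DifferentiableAt ℝ g z) (hiso : ∀ᶠ w in 𝓝 z, IsometricAt u w) (a b : Fin 2) :
    pd a u z ⬝ᵥ pd b (fun z' => ansatz u α g h x3 z') z
      = (1 : Matrix (Fin 2) (Fin 2) ℝ) a b + h * (x3 • sff u z + Bfield u α g z) a b := by
  have hz : IsometricAt u z := hiso.self_of_nhds
  rw [pd_ansatz hu hα hg]
  simp only [dotProduct_add, dotProduct_smul, smul_eq_mul, hz a, pd_dotProduct_nrm,
    pd_dotProduct_pd_pd hu hiso, Bfield, sff, Matrix.add_apply, Matrix.smul_apply, of_apply,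
    one_apply]
  fin_cases a <;> fin_cases b <;>
    simp only [Fin.zero_eta, Fin.mk_one, Fin.isValue, Fin.reduceEq, reduceIte] <;> ring

theorem nrm_dotProduct_pd_ansatz (hu : ContDiffAt ℝ 2 u z) (hα : DifferentiableAt ℝ α z)
    (hg : DifferentiableAt ℝ g z) (hiso : ∀ᶠ w in 𝓝 z, IsometricAt u w) (b : Fin 2) :
    nrm u z ⬝ᵥ pd b (fun z' => ansatz u α g h x3 z') z = -(h * bfield u α g z b) := by
  rw [pd_ansatz hu hα hg]
  simp only [dotProduct_add, dotProduct_smul, smul_eq_mul, dotProduct_comm (nrm u z) (pd _ u z),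
    pd_dotProduct_nrm, nrm_dotProduct_pd_pd hu, nrm_dotProduct_pd_nrm hu hiso,
    hiso.self_of_nhds.nrm_dotProduct_nrm, bfield, Fin.sum_univ_two, sff_comm hu b]
  ring

theorem transpose_Rmat_mul_scaledGradAnsatz :
    (Rmat u z)ᵀ * scaledGradAnsatz u α g h x3 z
      = of fun i j => ![pd 0 u z, pd 1 u z, nrm u z] i ⬝ᵥ
          ![pd 0 (fun z' => ansatz u α g h x3 z') z, pd 1 (fun z' => ansatz u α g h x3 z') z,
            (1 / h) • deriv (fun t => ansatz u α g h t z) x3] j :=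
  rfl

end Ansatz

theorem stmt19_general (S : Set (Fin 2 → ℝ)) (hS : IsOpen S)
    (u : (Fin 2 → ℝ) → (Fin 3 → ℝ)) (hu : ContDiffOn ℝ 2 u (closure S))
    (α : (Fin 2 → ℝ) → ℝ) (hα : ContDiffOn ℝ 1 α (closure S))
    (g : (Fin 2 → ℝ) → (Fin 2 → ℝ)) (hg : ContDiffOn ℝ 1 g (closure S))
    (hiso : ∀ z ∈ S, ∀ a b : Fin 2,
      pd a u z ⬝ᵥ pd b u z = if a = b then (1 : ℝ) else 0) :
    ∀ h > (0:ℝ), ∀ z ∈ S, ∀ x3 ∈ Set.Ioo (-(1/2):ℝ) (1/2),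
      (Rmat u z)ᵀ * scaledGradAnsatz u α g h x3 z
        = 1 + h • Gfield u α g x3 z := by
  intro h hh z hz x3 _
  have hcl : closure S ∈ 𝓝 z := mem_of_superset (hS.mem_nhds hz) subset_closure
  have hu2 : ContDiffAt ℝ 2 u z := hu.contDiffAt hcl
  have hα1 : DifferentiableAt ℝ α z := (hα.contDiffAt hcl).differentiableAt one_ne_zero
  have hg1 : DifferentiableAt ℝ g z := (hg.contDiffAt hcl).differentiableAt one_ne_zero
  have hiso' : ∀ᶠ w in 𝓝 z, IsometricAt u w := eventually_of_mem (hS.mem_nhds hz) hiso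
  rw [transpose_Rmat_mul_scaledGradAnsatz, one_div_smul_deriv_ansatz hh.ne']
  ext i j
  fin_cases i <;> fin_cases j <;>
    simp [pd_dotProduct_pd_ansatz hu2 hα1 hg1 hiso', nrm_dotProduct_pd_ansatz hu2 hα1 hg1 hiso',
      pd_dotProduct_nrm, hiso'.self_of_nhds.nrm_dotProduct_nrm, Gfield, one_apply]

/-- Schmidt's algebraic identity for the recovery ansatz: for an isometric immersion u
and the deformation v^h given by `ansatz`, one has Rᵀ ∇_h v^h = I + h G, with G as in
`Gfield`. -/
theorem stmt19 (S : Set (Fin 2 → ℝ)) (hS : IsOpen S) (hSb : Bornology.IsBounded S)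
    (u : (Fin 2 → ℝ) → (Fin 3 → ℝ)) (hu : ContDiffOn ℝ 2 u (closure S))
    (α : (Fin 2 → ℝ) → ℝ) (hα : ContDiffOn ℝ 1 α (closure S))
    (g : (Fin 2 → ℝ) → (Fin 2 → ℝ)) (hg : ContDiffOn ℝ 1 g (closure S))
    (hiso : ∀ z ∈ S, ∀ a b : Fin 2,
      pd a u z ⬝ᵥ pd b u z = if a = b then (1 : ℝ) else 0) :
    ∀ h > (0:ℝ), ∀ z ∈ S, ∀ x3 ∈ Set.Ioo (-(1/2):ℝ) (1/2),
      (Rmat u z)ᵀ * scaledGradAnsatz u α g h x3 z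
        = 1 + h • Gfield u α g x3 z :=
  stmt19_general S hS u hu α hα g hg hiso

end
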